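/- Let d ≥ 2, let P be a d-dimensional permutation matrix, and suppose ex_P(n) ≤ c_P·n^{d−1} for all n ∈ ℕ (some constant c_P ≥ 1). Then for every i ≥ 0, the number of P-avoiding d-dimensional binary matrices of size 2^i × ⋯ × 2^i satisfies |T_P(2^i)| ≤ 2^{2^d · c_P · 2^{i(d−1)}}. -/

import Mathlib

open Asymptotics

noncomputable section

/-- A `d`-dimensional binary matrix `P` of size `a × ⋯ × a` is contained in `A` of size
`n × ⋯ × n` if there are `d` strictly increasing maps sending 1-entries of `P` to 1-entries
of `A`. -/
def containsT {d a n : ℕ} (P : (Fin d → Fin a) → Bool) (A : (Fin d → Fin n) → Bool) : Prop :=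
  ∃ f : Fin d → (Fin a → Fin n), (∀ i, StrictMono (f i)) ∧
    ∀ x, P x = true → A (fun i => f i (x i)) = true

/-- `M` is a `d`-dimensional `n`-permutation matrix: its 1-entries are the positions
`(π 0 a, …, π (d-1) a)` for `a ∈ [n]`, where the `π i` are permutations of `[n]`. -/
def isPermTensor {d n : ℕ} (M : (Fin d → Fin n) → Bool) : Prop :=
  ∃ π : Fin d → Equiv.Perm (Fin n), ∀ x, (M x = true ↔ ∃ a, ∀ i, x i = π i a)

/-- `|S_P(n)|`: the number of `d`-dimensional `n`-permutation matrices avoiding `P`. -/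
def cardS {d a : ℕ} (P : (Fin d → Fin a) → Bool) (n : ℕ) : ℕ :=
  Nat.card {M : (Fin d → Fin n) → Bool // isPermTensor M ∧ ¬ containsT P M}

/-- `|T_P(u)|`: the number of `d`-dimensional binary matrices of size `u × ⋯ × u` avoiding `P`. -/
def cardT {d a : ℕ} (P : (Fin d → Fin a) → Bool) (u : ℕ) : ℕ :=
  Nat.card {M : (Fin d → Fin u) → Bool // ¬ containsT P M}

/-- `I^d_k`: the `d`-dimensional `k`-permutation matrix with 1-entries at `(i,…,i)`. -/
def diagT (d k : ℕ) : (Fin d → Fin k) → Bool :=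
  fun x => decide (∃ a : Fin k, ∀ i, x i = a)

/-- Number of 1-entries of a `d`-dimensional binary matrix. -/
def onesT {d n : ℕ} (A : (Fin d → Fin n) → Bool) : ℕ :=
  Nat.card {x : Fin d → Fin n // A x = true}

/-- `ex_P(n)`: the maximum number of 1-entries of a `P`-avoiding `d`-dimensional binary
matrix of size `n × ⋯ × n`. -/
def exT {d a : ℕ} (P : (Fin d → Fin a) → Bool) (n : ℕ) : ℕ :=
  sSup {c : ℕ | ∃ A : (Fin d → Fin n) → Bool, ¬ containsT P A ∧ c = onesT A}

-- embedding of block coordinates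
def embedB {d n : ℕ} (x : Fin d → Fin n) (ε : Fin d → Fin 2) : Fin d → Fin (2 * n) :=
  fun i => ⟨2 * (x i : ℕ) + (ε i : ℕ), by have := (x i).isLt; have := (ε i).isLt; omega⟩

def contractB {d n : ℕ} (A : (Fin d → Fin (2 * n)) → Bool) : (Fin d → Fin n) → Bool :=
  fun x => decide (∃ ε : Fin d → Fin 2, A (embedB x ε) = true)

lemma onesT_le_exT {d a n : ℕ} {P : (Fin d → Fin a) → Bool} {B : (Fin d → Fin n) → Bool}
    (hB : ¬ containsT P B) : onesT B ≤ exT P n := by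
  apply le_csSup
  · refine ⟨Nat.card (Fin d → Fin n), ?_⟩
    rintro m ⟨A, -, rfl⟩
    exact Nat.card_le_card_of_injective _ Subtype.val_injective
  · exact ⟨B, hB, rfl⟩

lemma contract_avoid {d a n : ℕ} {P : (Fin d → Fin a) → Bool} (hP : isPermTensor P)
    {A : (Fin d → Fin (2 * n)) → Bool} (hA : ¬ containsT P A) :
    ¬ containsT P (contractB A) := by
  obtain ⟨π, hπ⟩ := hP
  rintro ⟨f, hf, hc⟩
  apply hA
  have hc' : ∀ t : Fin a, ∃ ε : Fin d → Fin 2,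
      A (embedB (fun i => f i (π i t)) ε) = true := by
    intro t
    have h1 : P (fun i => π i t) = true := (hπ _).2 ⟨t, fun _ => rfl⟩
    have h2 := hc _ h1
    simpa [contractB] using h2
  choose ε hε using hc'
  refine ⟨fun i j => ⟨2 * (f i j : ℕ) + (ε ((π i).symm j) i : ℕ), by
    have := (f i j).isLt; have := (ε ((π i).symm j) i).isLt; omega⟩, ?_, ?_⟩
  · intro i j j' hjj
    have h3 : (f i j : ℕ) < (f i j' : ℕ) := hf i hjj
    have := (ε ((π i).symm j) i).isLt
    have := (ε ((π i).symm j') i).isLt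
    simp only [Fin.lt_def]
    omega
  · intro x hx
    obtain ⟨t, ht⟩ := (hπ x).1 hx
    have hxe : (fun i => (⟨2 * (f i (x i) : ℕ) + (ε ((π i).symm (x i)) i : ℕ), by
        have := (f i (x i)).isLt; have := (ε ((π i).symm (x i)) i).isLt; omega⟩ : Fin (2 * n)))
        = embedB (fun i => f i (π i t)) (ε t) := by
      funext i
      apply Fin.ext
      simp [embedB, ht i]
    rw [hxe]
    exact hε t

lemma card_step {d a : ℕ} (P : (Fin d → Fin a) → Bool) (hP : isPermTensor P) (n : ℕ) :
    cardT P (2 * n) ≤ cardT P n * 2 ^ (2 ^ d * exT P n) := by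
  classical
  set TPn := {B : (Fin d → Fin n) → Bool // ¬ containsT P B} with hTPn
  set Q := (Fin d → Fin 2) → Bool with hQ
  let Φ : {A : (Fin d → Fin (2 * n)) → Bool // ¬ containsT P A} →
      Σ b : TPn, ({x : Fin d → Fin n // b.1 x = true} → Q) :=
    fun A => ⟨⟨contractB A.1, contract_avoid hP A.2⟩, fun xs ε => A.1 (embedB xs.1 ε)⟩
  -- recovery map
  let R : (Σ b : TPn, ({x : Fin d → Fin n // b.1 x = true} → Q)) →
      ((Fin d → Fin (2 * n)) → Bool) :=
    fun s y =>
      if h : s.1.1 (fun i => ⟨(y i : ℕ) / 2, by have := (y i).isLt; omega⟩) = true then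
        s.2 ⟨_, h⟩ (fun i => ⟨(y i : ℕ) % 2, by omega⟩)
      else false
  have hR : ∀ A, R (Φ A) = A.1 := by
    intro A
    funext y
    set x : Fin d → Fin n := fun i => ⟨(y i : ℕ) / 2, by have := (y i).isLt; omega⟩ with hx
    set e : Fin d → Fin 2 := fun i => ⟨(y i : ℕ) % 2, by omega⟩ with he
    have hye : embedB x e = y := by
      funext i; apply Fin.ext; simp [embedB, hx, he]; omega
    by_cases hB : contractB A.1 x = true
    · simp only [R, Φ, hB, dite_true]
      rw [hye]
      exact dif_pos hB
    · have hAy : A.1 y = false := by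
        by_contra hcon
        apply hB
        simp only [contractB, decide_eq_true_eq]
        exact ⟨e, by rw [hye]; simpa using hcon⟩
      simp only [R, Φ, hB, dite_false]
      exact (dif_neg hB).trans hAy.symm
  have hΦ : Function.Injective Φ := by
    intro A A' h
    apply Subtype.ext
    rw [← hR A, ← hR A', h]
  have hcard : cardT P (2 * n) ≤ Nat.card (Σ b : TPn, ({x : Fin d → Fin n // b.1 x = true} → Q)) :=
    Nat.card_le_card_of_injective Φ hΦ
  refine hcard.trans ?_
  haveI : Fintype TPn := Fintype.ofFinite _
  rw [Nat.card_eq_fintype_card, Fintype.card_sigma]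
  have hbound : ∀ b : TPn, Fintype.card ({x : Fin d → Fin n // b.1 x = true} → Q)
      ≤ 2 ^ (2 ^ d * exT P n) := by
    intro b
    rw [Fintype.card_fun]
    have h1 : Fintype.card Q = 2 ^ 2 ^ d := by
      simp [hQ, Fintype.card_fun]
    have h2 : Fintype.card {x : Fin d → Fin n // b.1 x = true} ≤ exT P n := by
      have := onesT_le_exT b.2
      rwa [onesT, Nat.card_eq_fintype_card] at this
    calc Fintype.card Q ^ Fintype.card {x : Fin d → Fin n // b.1 x = true}
        ≤ (2 ^ 2 ^ d) ^ exT P n := by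
          rw [h1]; exact Nat.pow_le_pow_right (by positivity) h2
      _ = 2 ^ (2 ^ d * exT P n) := by rw [← pow_mul]
  calc (∑ b : TPn, Fintype.card ({x : Fin d → Fin n // b.1 x = true} → Q))
      ≤ ∑ _b : TPn, 2 ^ (2 ^ d * exT P n) := Finset.sum_le_sum fun b _ => hbound b
    _ = Fintype.card TPn * 2 ^ (2 ^ d * exT P n) := by
        rw [Finset.sum_const, Finset.card_univ, smul_eq_mul]
    _ = cardT P n * 2 ^ (2 ^ d * exT P n) := by
        rw [cardT, Nat.card_eq_fintype_card]

/-- If `ex_P(n) ≤ c·n^(d-1)` for all `n`, then `|T_P(2^i)| ≤ 2^(2^d·c·2^(i(d-1)))`. -/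
theorem stmt19 (d a : ℕ) (hd : 2 ≤ d) (P : (Fin d → Fin a) → Bool) (hP : isPermTensor P)
    (c : ℝ) (hc : 1 ≤ c) (hex : ∀ n : ℕ, (exT P n : ℝ) ≤ c * (n : ℝ) ^ (d - 1)) :
    ∀ i : ℕ, (cardT P (2 ^ i) : ℝ) ≤
      (2 : ℝ) ^ (((2 : ℝ) ^ d) * c * ((2 : ℝ) ^ (i * (d - 1)))) := by
  have hE1 : (1 : ℝ) ≤ 2 ^ d := one_le_pow₀ one_le_two
  have geom : ∀ i : ℕ, (∑ j ∈ Finset.range i, (2:ℝ) ^ (j * (d-1)))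
      ≤ 2 ^ (i * (d-1)) - 1 := by
    intro i
    induction i with
    | zero => simp
    | succ i ih =>
      rw [Finset.sum_range_succ]
      have hee : i * (d-1) + 1 ≤ (i+1) * (d-1) := by
        have : 1 ≤ d - 1 := by omega
        calc i * (d-1) + 1 ≤ i * (d-1) + (d-1) := by omega
          _ = (i+1) * (d-1) := by ring
      have h1 : (2:ℝ) ^ (i*(d-1)) * 2 ≤ 2 ^ ((i+1)*(d-1)) := by
        calc (2:ℝ) ^ (i*(d-1)) * 2 = 2 ^ (i*(d-1)+1) := by rw [pow_succ]
          _ ≤ 2 ^ ((i+1)*(d-1)) := pow_le_pow_right₀ one_le_two hee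
      linarith
  have claim : ∀ i : ℕ, (cardT P (2 ^ i) : ℝ) ≤
      (2:ℝ) ^ ((1:ℝ) + 2 ^ d * c * ∑ j ∈ Finset.range i, (2:ℝ) ^ (j * (d-1))) := by
    intro i
    induction i with
    | zero =>
      have hbase : cardT P 1 ≤ 2 := by
        have h := Nat.card_le_card_of_injective
          (Subtype.val : {M : (Fin d → Fin 1) → Bool // ¬ containsT P M} →
            ((Fin d → Fin 1) → Bool)) Subtype.val_injective
        have h2 : Nat.card ((Fin d → Fin 1) → Bool) = 2 := by
          simp [Nat.card_eq_fintype_card, Fintype.card_fun]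
        rw [h2] at h
        exact h
      simp only [pow_zero, Finset.range_zero, Finset.sum_empty, mul_zero, add_zero,
        Real.rpow_one]
      exact_mod_cast hbase
    | succ i ih =>
      have key : cardT P (2 ^ (i+1)) ≤ cardT P (2 ^ i) * 2 ^ (2 ^ d * exT P (2 ^ i)) := by
        rw [pow_succ, mul_comm ((2:ℕ)^i) 2]
        exact card_step P hP (2 ^ i)
      have keyR : (cardT P (2 ^ (i+1)) : ℝ) ≤
          (cardT P (2 ^ i) : ℝ) * (2:ℝ) ^ ((2 ^ d * exT P (2 ^ i) : ℕ) : ℝ) := by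
        rw [Real.rpow_natCast]
        exact_mod_cast key
      have hexp : ((2 ^ d * exT P (2 ^ i) : ℕ) : ℝ) ≤ 2 ^ d * c * (2:ℝ) ^ (i * (d-1)) := by
        push_cast
        have h1 := hex (2 ^ i)
        have h2 : ((2 ^ i : ℕ) : ℝ) ^ (d - 1) = (2:ℝ) ^ (i * (d-1)) := by
          push_cast
          rw [pow_mul]
        rw [h2] at h1
        have h3 : (0:ℝ) ≤ 2 ^ d := by positivity
        calc (2:ℝ) ^ d * (exT P (2 ^ i) : ℝ) ≤ 2 ^ d * (c * 2 ^ (i * (d-1))) :=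
              mul_le_mul_of_nonneg_left h1 h3
          _ = 2 ^ d * c * 2 ^ (i * (d-1)) := by ring
      have hmono : (2:ℝ) ^ ((2 ^ d * exT P (2 ^ i) : ℕ) : ℝ) ≤
          (2:ℝ) ^ (2 ^ d * c * (2:ℝ) ^ (i * (d-1))) :=
        Real.rpow_le_rpow_of_exponent_le one_le_two hexp
      have hnn : (0:ℝ) ≤ (cardT P (2 ^ i) : ℝ) := Nat.cast_nonneg _
      calc (cardT P (2 ^ (i+1)) : ℝ)
          ≤ (cardT P (2 ^ i) : ℝ) * (2:ℝ) ^ ((2 ^ d * exT P (2 ^ i) : ℕ) : ℝ) := keyR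
        _ ≤ (2:ℝ) ^ ((1:ℝ) + 2 ^ d * c * ∑ j ∈ Finset.range i, (2:ℝ) ^ (j * (d-1))) *
            (2:ℝ) ^ (2 ^ d * c * (2:ℝ) ^ (i * (d-1))) := by
            apply mul_le_mul ih hmono (Real.rpow_nonneg (by norm_num) _)
              (Real.rpow_nonneg (by norm_num) _)
        _ = (2:ℝ) ^ ((1:ℝ) + 2 ^ d * c * ∑ j ∈ Finset.range (i+1), (2:ℝ) ^ (j * (d-1))) := by
            rw [← Real.rpow_add (by norm_num : (0:ℝ) < 2), Finset.sum_range_succ]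
            congr 1
            ring
  intro i
  refine (claim i).trans ?_
  apply Real.rpow_le_rpow_of_exponent_le one_le_two
  have hS := geom i
  have hT : (0:ℝ) < (2:ℝ) ^ (i * (d-1)) := by positivity
  nlinarith [mul_le_mul_of_nonneg_left hS (by positivity : (0:ℝ) ≤ 2 ^ d * c),
    mul_le_mul hE1 hc (by norm_num) (by positivity : (0:ℝ) ≤ (2:ℝ)^d)]
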